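/- Shannon's noisy channel coding theorem for the binary symmetric channel: let p be a real number with 0 < p < 1/2, let δ > 0 be any small positive real number, and let ρ be a positive rate with ρ < C = 1 - h₂(p). Then for all sufficiently large block lengths n there exist a code C_n ⊆ (Fin n → ZMod 2) with |C_n| ≥ 2^(ρ n) and a decoding map D : (Fin n → ZMod 2) → C_n such that the average probability of correct decoding exceeds 1 - δ; that is, (1/|C_n|) · Σ_{u ∈ C_n} Σ_{e ∈ (Fin n → ZMod 2)} p^(wt(e)) (1-p)^(n - wt(e)) · [D(u + e) = u] > 1 - δ, where wt(e) denotes the Hamming weight of e and [·] is the indicator of the event that decoding is correct. -/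

import Mathlib

/-!
Random coding with ball decoding and expurgation. Fix `p < r ≤ 1/2` with `h₂(r) < 1 - ρ`, draw
`M ≈ 2 ^ (ρ n)` codewords independently and uniformly, and decode a received word to the unique
codeword within Hamming distance `r n` of it. Message `i` can be missed only if the error has
weight above `r n`, which has exponentially small probability by a Chernoff bound, or if another
codeword falls into the ball of radius `r n` around the received word, which on average over
codebooks has probability at most `M 2 ^ (h₂(r) n) / 2 ^ n → 0`. Hence some codebook has total
error bound at most `M η` with `η → 0`. Discarding the messages whose bound is at least `1`
(among them every repeated codeword) leaves at least `M (1 - η)` distinct codewords, on which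
the ball decoder succeeds with average probability at least `1 - 2 η`.
-/

/-- The binary entropy function `h₂(x) = -x log₂ x - (1-x) log₂ (1-x)`. -/
noncomputable def binEnt (x : ℝ) : ℝ :=
  -(x * Real.logb 2 x) - (1 - x) * Real.logb 2 (1 - x)

open Finset Real Filter Topology

theorem pow_hammingNorm_mul_pow_eq_prod {ι β R : Type*} [Fintype ι] [Zero β] [DecidableEq β]
    [CommMonoid R] (a b : R) (e : ι → β) :
    a ^ hammingNorm e * b ^ (Fintype.card ι - hammingNorm e) = ∏ i, if e i = 0 then b else a := by
  have hcard := card_filter_add_card_filter_not (s := univ) (fun i => e i ≠ 0)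
  rw [card_univ] at hcard
  rw [prod_ite, prod_const, prod_const, mul_comm, hammingNorm]
  simp only [not_not] at hcard ⊢
  congr 2
  omega

theorem sum_pow_hammingNorm_mul_pow {ι β R : Type*} [Fintype ι] [DecidableEq ι] [Fintype β]
    [Zero β] [DecidableEq β] [CommSemiring R] (a b : R) :
    ∑ e : ι → β, a ^ hammingNorm e * b ^ (Fintype.card ι - hammingNorm e)
      = ((Fintype.card β - 1) • a + b) ^ Fintype.card ι := by
  have hcoord : ∑ x : β, (if x = 0 then b else a) = (Fintype.card β - 1) • a + b := by
    rw [← sum_erase_add _ _ (mem_univ 0), if_pos rfl,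
      sum_congr rfl fun x hx => if_neg (ne_of_mem_erase hx), sum_const,
      card_erase_of_mem (mem_univ 0), card_univ]
  simp_rw [pow_hammingNorm_mul_pow_eq_prod]
  rw [← Fintype.prod_sum fun (_ : ι) (x : β) => if x = 0 then b else a, hcoord, prod_const,
    card_univ]

theorem sum_pow_hammingNorm_mul_pow_zmod_two (n : ℕ) (a b : ℝ) :
    ∑ e : Fin n → ZMod 2, a ^ hammingNorm e * b ^ (n - hammingNorm e) = (a + b) ^ n := by
  simpa using sum_pow_hammingNorm_mul_pow (ι := Fin n) (β := ZMod 2) a b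

noncomputable def bscWeight (n : ℕ) (p : ℝ) (e : Fin n → ZMod 2) : ℝ :=
  p ^ hammingNorm e * (1 - p) ^ (n - hammingNorm e)

theorem bscWeight_nonneg {n : ℕ} {p : ℝ} (hp0 : 0 ≤ p) (hp1 : p ≤ 1) (e : Fin n → ZMod 2) :
    0 ≤ bscWeight n p e :=
  mul_nonneg (pow_nonneg hp0 _) (pow_nonneg (sub_nonneg.2 hp1) _)

theorem sum_bscWeight (n : ℕ) (p : ℝ) : ∑ e, bscWeight n p e = 1 := by
  simp [bscWeight, sum_pow_hammingNorm_mul_pow_zmod_two]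

section Hamming

variable {ι β : Type*} [Fintype ι] [DecidableEq ι] [Fintype β] [Zero β] [DecidableEq β]

noncomputable def hammingTail (P : (ι → β) → ℝ) (R : ℝ) : ℝ :=
  ∑ e with R < hammingNorm e, P e

variable (ι β) in
noncomputable def hammingBallCard (R : ℝ) : ℕ :=
  #{x : ι → β | hammingNorm x ≤ R}

variable (ι β) in
noncomputable def randomCodingBound (P : (ι → β) → ℝ) (M : ℕ) (R : ℝ) : ℝ :=
  hammingTail P R + (M - 1) * hammingBallCard ι β R / Fintype.card (ι → β)

theorem randomCodingBound_nonneg {P : (ι → β) → ℝ} (hP0 : ∀ e, 0 ≤ P e) {M : ℕ} (hM : 0 < M)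
    (R : ℝ) : 0 ≤ randomCodingBound ι β P M R := by
  have hM1 : (0 : ℝ) ≤ M - 1 := sub_nonneg.2 (Nat.one_le_cast.2 hM)
  have htail : 0 ≤ hammingTail P R := sum_nonneg fun e _ => hP0 e
  unfold randomCodingBound
  positivity

end Hamming

theorem hammingTail_bscWeight_le {p : ℝ} (hp0 : 0 ≤ p) (hp1 : p ≤ 1) {t : ℝ} (ht : 1 ≤ t)
    (r : ℝ) (n : ℕ) :
    hammingTail (bscWeight n p) (r * n) ≤ ((p * t + (1 - p)) * t ^ (-r)) ^ n := by
  have ht0 : 0 < t := by linarith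
  have hterm (e : Fin n → ZMod 2) : bscWeight n p e * t ^ ((hammingNorm e : ℝ) - r * n)
      = (p * t) ^ hammingNorm e * (1 - p) ^ (n - hammingNorm e) * t ^ (-(r * n)) := by
    rw [bscWeight, sub_eq_add_neg (hammingNorm e : ℝ), rpow_add ht0, rpow_natCast, mul_pow]
    ring
  calc hammingTail (bscWeight n p) (r * n)
      ≤ ∑ e with r * n < hammingNorm e, bscWeight n p e * t ^ ((hammingNorm e : ℝ) - r * n) :=
        sum_le_sum fun e he => le_mul_of_one_le_right (bscWeight_nonneg hp0 hp1 e)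
          (one_le_rpow ht (sub_nonneg.2 (mem_filter.1 he).2.le))
    _ ≤ ∑ e, bscWeight n p e * t ^ ((hammingNorm e : ℝ) - r * n) :=
        sum_le_sum_of_subset_of_nonneg (filter_subset _ _) fun e _ _ =>
          mul_nonneg (bscWeight_nonneg hp0 hp1 e) (rpow_nonneg ht0.le _)
    _ = (p * t + (1 - p)) ^ n * t ^ (-(r * n)) := by
        simp_rw [hterm, ← sum_mul, sum_pow_hammingNorm_mul_pow_zmod_two]
    _ = ((p * t + (1 - p)) * t ^ (-r)) ^ n := by
        rw [mul_pow, ← rpow_natCast (t ^ (-r)), ← rpow_mul ht0.le, neg_mul]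

theorem exists_chernoff_base {p r : ℝ} (hp : 0 < p) (hpr : p < r) :
    ∃ t, 1 ≤ t ∧ (p * t + (1 - p)) * t ^ (-r) < 1 := by
  set t := (p + r) / (2 * p)
  have ht : 1 < t := by rw [lt_div_iff₀ (by positivity)]; linarith
  have hpt : p * t < r := by
    rw [mul_div_assoc', div_lt_iff₀ (by positivity)]; nlinarith
  have ht0 : 0 < t := by linarith
  have hlog : p * (t - 1) < r * log t := calc
    p * (t - 1) = p * t * (1 - t⁻¹) := by field_simp
    _ < r * (1 - t⁻¹) := mul_lt_mul_of_pos_right hpt (by simp [inv_lt_one_of_one_lt₀ ht])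
    _ ≤ r * log t := mul_le_mul_of_nonneg_left (one_sub_inv_le_log_of_pos ht0) (by linarith)
  refine ⟨t, ht.le, ?_⟩
  calc (p * t + (1 - p)) * t ^ (-r) ≤ exp (p * (t - 1)) * exp (log t * (-r)) := by
        rw [← rpow_def_of_pos ht0]
        gcongr
        linarith [add_one_le_exp (p * (t - 1))]
    _ < 1 := by rw [← exp_add, exp_lt_one_iff]; linarith

theorem tendsto_hammingTail_bscWeight {p r : ℝ} (hp : 0 < p) (hp1 : p ≤ 1) (hpr : p < r) :
    Tendsto (fun n : ℕ => hammingTail (bscWeight n p) (r * n)) atTop (𝓝 0) := by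
  obtain ⟨t, ht, hc⟩ := exists_chernoff_base hp hpr
  have hc0 : 0 ≤ (p * t + (1 - p)) * t ^ (-r) :=
    mul_nonneg (by nlinarith) (rpow_nonneg (by linarith) _)
  exact squeeze_zero (fun n => sum_nonneg fun e _ => bscWeight_nonneg hp.le hp1 e)
    (hammingTail_bscWeight_le hp.le hp1 ht r) (tendsto_pow_atTop_nhds_zero_of_lt_one hc0 hc)

theorem rpow_mul_rpow_sub_le {a b w s y : ℝ} (ha : 0 < a) (hab : a ≤ b) (hws : w ≤ s) :
    a ^ s * b ^ (y - s) ≤ a ^ w * b ^ (y - w) := by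
  have hb : 0 < b := ha.trans_le hab
  calc a ^ s * b ^ (y - s) = a ^ w * b ^ (y - s) * a ^ (s - w) := by
        rw [mul_right_comm, ← rpow_add ha, add_sub_cancel]
    _ ≤ a ^ w * b ^ (y - s) * b ^ (s - w) := by gcongr
    _ = a ^ w * b ^ (y - w) := by rw [mul_assoc, ← rpow_add hb, sub_add_sub_cancel]

theorem two_rpow_neg_binEnt_mul {r : ℝ} (hr0 : 0 < r) (hr1 : r < 1) (y : ℝ) :
    (2 : ℝ) ^ (-(binEnt r * y)) = r ^ (r * y) * (1 - r) ^ ((1 - r) * y) := by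
  have hlogb {x : ℝ} (hx : 0 < x) (z : ℝ) : x ^ z = 2 ^ (logb 2 x * z) := by
    rw [rpow_mul zero_le_two, rpow_logb zero_lt_two (by norm_num) hx]
  rw [hlogb hr0, hlogb (sub_pos.2 hr1), ← rpow_add zero_lt_two, binEnt]
  ring_nf

theorem hammingBallCard_le {r : ℝ} (hr0 : 0 < r) (hr : r ≤ 1 / 2) (n : ℕ) :
    (hammingBallCard (Fin n) (ZMod 2) (r * n) : ℝ) ≤ 2 ^ (binEnt r * n) := by
  have hweight {e : Fin n → ZMod 2} (he : (hammingNorm e : ℝ) ≤ r * n) :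
      (2 : ℝ) ^ (-(binEnt r * n)) ≤ r ^ hammingNorm e * (1 - r) ^ (n - hammingNorm e) := by
    have hwn : hammingNorm e ≤ n := by simpa using hammingNorm_le_card_fintype (x := e)
    rw [two_rpow_neg_binEnt_mul hr0 (by linarith), sub_mul, one_mul, ← rpow_natCast,
      ← rpow_natCast, Nat.cast_sub hwn]
    exact rpow_mul_rpow_sub_le hr0 (by linarith) he
  have hsum : (hammingBallCard (Fin n) (ZMod 2) (r * n) : ℝ) * 2 ^ (-(binEnt r * n)) ≤ 1 := calc
    _ = ∑ e with (hammingNorm e : ℝ) ≤ r * n, (2 : ℝ) ^ (-(binEnt r * n)) := by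
        rw [sum_const, nsmul_eq_mul, hammingBallCard]
    _ ≤ ∑ e with (hammingNorm e : ℝ) ≤ r * n, r ^ hammingNorm e * (1 - r) ^ (n - hammingNorm e) :=
        sum_le_sum fun e he => hweight (mem_filter.1 he).2
    _ ≤ ∑ e : Fin n → ZMod 2, r ^ hammingNorm e * (1 - r) ^ (n - hammingNorm e) :=
        sum_le_sum_of_subset_of_nonneg (filter_subset _ _) fun e _ _ => by
          have : 0 ≤ 1 - r := by linarith
          positivity
    _ = 1 := by rw [sum_pow_hammingNorm_mul_pow_zmod_two, add_sub_cancel, one_pow]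
  rwa [rpow_neg zero_le_two, ← div_eq_mul_inv, div_le_one (by positivity)] at hsum

section RandomCoding

variable {ι β κ : Type*} [Fintype ι] [DecidableEq β]

open scoped Classical in
noncomputable def ballDecoder (C : Finset (ι → β)) (R : ℝ) (w₀ v : ι → β) : ι → β :=
  if h : ∃! w, w ∈ C ∧ (hammingDist w v : ℝ) ≤ R then h.choose else w₀

theorem ballDecoder_mem {C : Finset (ι → β)} {w₀ : ι → β} (h₀ : w₀ ∈ C) (R : ℝ) (v : ι → β) :
    ballDecoder C R w₀ v ∈ C := by
  unfold ballDecoder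
  split_ifs with h
  exacts [h.choose_spec.1.1, h₀]

theorem ballDecoder_eq {C : Finset (ι → β)} {R : ℝ} {u v : ι → β} (hu : u ∈ C)
    (hv : (hammingDist u v : ℝ) ≤ R) (hfar : ∀ w ∈ C, w ≠ u → R < hammingDist w v)
    (w₀ : ι → β) : ballDecoder C R w₀ v = u := by
  have h : ∃! w, w ∈ C ∧ (hammingDist w v : ℝ) ≤ R :=
    ⟨u, ⟨hu, hv⟩, fun w ⟨hw, hwv⟩ => by_contra fun hne => (hfar w hw hne).not_ge hwv⟩
  rw [ballDecoder, dif_pos h]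
  exact (h.choose_spec.2 u ⟨hu, hv⟩).symm

variable [AddGroup β] [Fintype κ] [DecidableEq κ]

theorem hammingDist_self_add_right (x e : ι → β) : hammingDist x (x + e) = hammingNorm e := by
  rw [hammingDist_eq_hammingNorm, neg_add_cancel_left]

/-- Counts the events that can make the ball decoder of radius `R` miss message `i` of the
codebook `f` under the error `e`. -/
noncomputable def confusionCount (f : κ → ι → β) (R : ℝ) (i : κ) (e : ι → β) : ℝ :=
  (if R < hammingNorm e then 1 else 0) +
    ∑ j ∈ univ.erase i, if (hammingDist (f j) (f i + e) : ℝ) ≤ R then 1 else 0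

theorem confusionCount_nonneg (f : κ → ι → β) (R : ℝ) (i : κ) (e : ι → β) :
    0 ≤ confusionCount f R i e := by
  unfold confusionCount
  positivity

theorem one_le_confusionCount {f : κ → ι → β} {R : ℝ} {i : κ} {e : ι → β}
    (h : R < hammingNorm e ∨ ∃ j ≠ i, (hammingDist (f j) (f i + e) : ℝ) ≤ R) :
    1 ≤ confusionCount f R i e := by
  set d := fun j => if (hammingDist (f j) (f i + e) : ℝ) ≤ R then (1 : ℝ) else 0
  have hd : ∀ j ∈ univ.erase i, 0 ≤ d j := fun _ _ => by positivity
  have hind : (0 : ℝ) ≤ if R < hammingNorm e then 1 else 0 := by positivity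
  unfold confusionCount
  rcases h with he | ⟨j, hji, hj⟩
  · rw [if_pos he]
    linarith [sum_nonneg hd]
  · have := single_le_sum hd (mem_erase.2 ⟨hji, mem_univ j⟩)
    simp only [d, if_pos hj] at this
    linarith

theorem one_le_confusionCount_of_eq {f : κ → ι → β} {i j : κ} (hji : j ≠ i) (hf : f j = f i)
    (R : ℝ) (e : ι → β) : 1 ≤ confusionCount f R i e := by
  refine one_le_confusionCount (or_iff_not_imp_left.2 fun he => ⟨j, hji, ?_⟩)
  rw [hf, hammingDist_self_add_right]
  exact not_lt.1 he

theorem one_le_confusionCount_of_ballDecoder_ne {f : κ → ι → β} {C : Finset (ι → β)}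
    (hC : ∀ w ∈ C, ∃ j, f j = w) {i : κ} (hi : f i ∈ C) {R : ℝ} {w₀ e : ι → β}
    (hD : ballDecoder C R w₀ (f i + e) ≠ f i) : 1 ≤ confusionCount f R i e := by
  by_contra! h
  obtain ⟨he, hfar⟩ := not_or.1 (mt one_le_confusionCount h.not_ge)
  refine hD (ballDecoder_eq hi ?_ ?_ w₀)
  · rw [hammingDist_self_add_right]
    exact not_lt.1 he
  · rintro _ hw hne
    obtain ⟨j, rfl⟩ := hC _ hw
    push Not at hfar
    exact hfar j (fun hji => hne (hji ▸ rfl))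

variable [DecidableEq ι] [Fintype β]

theorem sum_indicator_hammingDist_le (R : ℝ) (y : ι → β) :
    ∑ x : ι → β, (if (hammingDist x y : ℝ) ≤ R then 1 else 0 : ℝ) = hammingBallCard ι β R := by
  simp_rw [hammingDist_comm _ y, hammingDist_eq_hammingNorm]
  rw [← Equiv.sum_comp (Equiv.addLeft y), hammingBallCard, ← sum_boole]
  simp

theorem sum_codebook_indicator_hammingDist_le {i j : κ} (hij : i ≠ j) (R : ℝ) (e : ι → β) :
    ∑ f : κ → ι → β, (if (hammingDist (f j) (f i + e) : ℝ) ≤ R then 1 else 0 : ℝ)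
      = Fintype.card (κ → ι → β) * hammingBallCard ι β R / Fintype.card (ι → β) := by
  set φ := fun f : κ → ι → β => (if (hammingDist (f j) (f i + e) : ℝ) ≤ R then 1 else 0 : ℝ)
  have hball (f : κ → ι → β) : ∑ c, φ (f + Pi.single j c) = hammingBallCard ι β R := by
    simp only [φ, Pi.add_apply, Pi.single_eq_same, Pi.single_eq_of_ne hij, add_zero]
    exact (Equiv.sum_comp (Equiv.addLeft (f j)) _).trans (sum_indicator_hammingDist_le R _)
  rw [eq_div_iff (by positivity), mul_comm]
  calc (Fintype.card (ι → β) : ℝ) * ∑ f, φ f = ∑ _c : ι → β, ∑ f, φ f := by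
        rw [sum_const, card_univ, nsmul_eq_mul]
    -- translating the `j`-th codeword by `c` permutes the codebooks and fixes the `i`-th one
    _ = ∑ c : ι → β, ∑ f : κ → ι → β, φ (f + Pi.single j c) :=
        sum_congr rfl fun c _ =>
          Fintype.sum_equiv (Equiv.addRight (Pi.single j c)).symm _ _ fun f => by simp
    _ = Fintype.card (κ → ι → β) * hammingBallCard ι β R := by
        rw [sum_comm, sum_congr rfl fun f _ => hball f, sum_const, card_univ, nsmul_eq_mul]

theorem sum_confusionCount (R : ℝ) (i : κ) (e : ι → β) :
    ∑ f : κ → ι → β, confusionCount f R i e = Fintype.card (κ → ι → β) *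
      ((if R < hammingNorm e then 1 else 0) +
        (Fintype.card κ - 1) * hammingBallCard ι β R / Fintype.card (ι → β)) := by
  have : Nonempty κ := ⟨i⟩
  simp only [confusionCount, sum_add_distrib, sum_const, card_univ, nsmul_eq_mul]
  rw [sum_comm, sum_congr rfl fun j hj =>
    sum_codebook_indicator_hammingDist_le (Ne.symm (ne_of_mem_erase hj)) R e, sum_const,
    card_erase_of_mem (mem_univ i), card_univ, nsmul_eq_mul, Nat.cast_pred Fintype.card_pos]
  ring

noncomputable def errorBound (P : (ι → β) → ℝ) (f : κ → ι → β) (R : ℝ) (i : κ) : ℝ :=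
  ∑ e, P e * confusionCount f R i e

variable {P : (ι → β) → ℝ}

theorem sum_errorBound (hP : ∑ e, P e = 1) (R : ℝ) (i : κ) :
    ∑ f : κ → ι → β, errorBound P f R i
      = Fintype.card (κ → ι → β) * randomCodingBound ι β P (Fintype.card κ) R := by
  simp only [errorBound]
  rw [sum_comm]
  simp only [← mul_sum, sum_confusionCount, randomCodingBound, hammingTail, sum_filter]
  set Q : ℝ := (Fintype.card (κ → ι → β) : ℝ)
  set K : ℝ := (Fintype.card κ - 1 : ℝ) * hammingBallCard ι β R / Fintype.card (ι → β)
  have hterm (e : ι → β) : P e * (Q * ((if R < hammingNorm e then 1 else 0) + K))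
      = Q * ((if R < hammingNorm e then P e else 0) + K * P e) := by
    split_ifs <;> ring
  rw [sum_congr rfl fun e _ => hterm e, ← mul_sum, sum_add_distrib, ← mul_sum, hP, mul_one]

theorem errorBound_nonneg (hP0 : ∀ e, 0 ≤ P e) (f : κ → ι → β) (R : ℝ) (i : κ) :
    0 ≤ errorBound P f R i :=
  sum_nonneg fun e _ => mul_nonneg (hP0 e) (confusionCount_nonneg f R i e)

theorem one_le_errorBound_of_eq (hP0 : ∀ e, 0 ≤ P e) (hP : ∑ e, P e = 1) {f : κ → ι → β}
    {i j : κ} (hji : j ≠ i) (hf : f j = f i) (R : ℝ) : 1 ≤ errorBound P f R i := calc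
  1 = ∑ e, P e * 1 := by simp [hP]
  _ ≤ errorBound P f R i :=
    sum_le_sum fun e _ => mul_le_mul_of_nonneg_left (one_le_confusionCount_of_eq hji hf R e) (hP0 e)

theorem one_sub_errorBound_le (hP0 : ∀ e, 0 ≤ P e) (hP : ∑ e, P e = 1) {f : κ → ι → β}
    {C : Finset (ι → β)} (hC : ∀ w ∈ C, ∃ j, f j = w) {i : κ} (hi : f i ∈ C) (R : ℝ) (w₀ : ι → β) :
    1 - errorBound P f R i ≤
      ∑ e, P e * if ballDecoder C R w₀ (f i + e) = f i then 1 else 0 := calc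
  1 - errorBound P f R i = ∑ e, P e * (1 - confusionCount f R i e) := by
    simp [errorBound, mul_sub, sum_sub_distrib, hP]
  _ ≤ _ := by
    refine sum_le_sum fun e _ => mul_le_mul_of_nonneg_left ?_ (hP0 e)
    split_ifs with hD
    · linarith [confusionCount_nonneg f R i e]
    · linarith [one_le_confusionCount_of_ballDecoder_ne hC hi hD]

theorem exists_codebook_sum_errorBound_le (hP : ∑ e, P e = 1) (R : ℝ) :
    ∃ f : κ → ι → β, ∑ i, errorBound P f R i ≤
      Fintype.card κ * randomCodingBound ι β P (Fintype.card κ) R := by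
  have hsum : ∑ f : κ → ι → β, ∑ i, errorBound P f R i =
      ∑ _f : κ → ι → β, Fintype.card κ * randomCodingBound ι β P (Fintype.card κ) R := by
    rw [sum_comm, sum_congr rfl fun i _ => sum_errorBound hP R i]
    simp only [sum_const, card_univ, nsmul_eq_mul]
    ring
  obtain ⟨f, -, hf⟩ := exists_le_of_sum_le univ_nonempty hsum.le
  exact ⟨f, hf⟩

theorem exists_code_ballDecoder (hP0 : ∀ e, 0 ≤ P e) (hP : ∑ e, P e = 1) (R : ℝ) (M : ℕ) :
    ∃ C : Finset (ι → β), M * (1 - randomCodingBound ι β P M R) ≤ #C ∧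
      ∀ w₀, #C - M * randomCodingBound ι β P M R ≤
        ∑ u ∈ C, ∑ e, P e * if ballDecoder C R w₀ (u + e) = u then 1 else 0 := by
  obtain ⟨f, hf⟩ := exists_codebook_sum_errorBound_le (κ := Fin M) hP R
  rw [Fintype.card_fin] at hf
  set I : Finset (Fin M) := {i | errorBound P f R i < 1}
  have hinj : Set.InjOn f I := fun i _ j hj hfij => by_contra fun hne =>
    (mem_filter.1 hj).2.not_ge (one_le_errorBound_of_eq hP0 hP hne hfij R)
  have hbad : (M : ℝ) - #I ≤ ∑ i, errorBound P f R i := by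
    have hsplit :=
      card_filter_add_card_filter_not (s := univ) (fun i : Fin M => errorBound P f R i < 1)
    have hmarkov := card_nsmul_le_sum ({i | ¬ errorBound P f R i < 1} : Finset (Fin M))
      (errorBound P f R) 1 fun i hi => not_lt.1 (mem_filter.1 hi).2
    have hsub := sum_le_sum_of_subset_of_nonneg
      (filter_subset (fun i => ¬ errorBound P f R i < 1) univ)
      fun i _ _ => errorBound_nonneg hP0 f R i
    rw [card_univ, Fintype.card_fin] at hsplit
    rw [nsmul_one] at hmarkov
    have hM : (M : ℝ) = #I + #{i | ¬ errorBound P f R i < 1} := by exact_mod_cast hsplit.symm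
    linarith
  have hI : ∑ i ∈ I, errorBound P f R i ≤ ∑ i, errorBound P f R i :=
    sum_le_sum_of_subset_of_nonneg (filter_subset _ univ) fun i _ _ => errorBound_nonneg hP0 f R i
  have hC : ∀ w ∈ I.image f, ∃ j, f j = w := fun w hw => by
    obtain ⟨j, -, rfl⟩ := mem_image.1 hw
    exact ⟨j, rfl⟩
  refine ⟨I.image f, ?_, fun w₀ => ?_⟩
  · rw [card_image_of_injOn hinj]
    linarith
  · rw [card_image_of_injOn hinj, sum_image hinj]
    calc (#I : ℝ) - M * randomCodingBound ι β P M R ≤ ∑ i ∈ I, (1 - errorBound P f R i) := by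
          rw [sum_sub_distrib, sum_const, nsmul_one]
          linarith
      _ ≤ _ := sum_le_sum fun i hi => one_sub_errorBound_le hP0 hP hC (mem_image_of_mem f hi) R w₀

theorem exists_code_ballDecoder_of_lt (hP0 : ∀ e, 0 ≤ P e) (hP : ∑ e, P e = 1) {R δ : ℝ}
    {M : ℕ} (hM : 0 < M) (hη : randomCodingBound ι β P M R < min (δ / 2) (1 / 2)) :
    ∃ C : Finset (ι → β), (M : ℝ) ≤ 2 * #C ∧ ∀ w₀, (1 - δ) * #C <
      ∑ u ∈ C, ∑ e, P e * if ballDecoder C R w₀ (u + e) = u then 1 else 0 := by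
  obtain ⟨C, hC, hdec⟩ := exists_code_ballDecoder hP0 hP R M
  have hMpos : (0 : ℝ) < M := by exact_mod_cast hM
  have hη₀ := randomCodingBound_nonneg hP0 hM R
  have hη₁ : randomCodingBound ι β P M R < 1 / 2 := hη.trans_le (min_le_right _ _)
  have hη₂ : randomCodingBound ι β P M R < δ / 2 := hη.trans_le (min_le_left _ _)
  have hMC : (M : ℝ) ≤ 2 * #C := by nlinarith
  refine ⟨C, hMC, fun w₀ => lt_of_lt_of_le ?_ (hdec w₀)⟩
  nlinarith

end RandomCoding

theorem binEnt_eq_binEntropy_div (x : ℝ) : binEnt x = binEntropy x / log 2 := by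
  simp only [binEnt, binEntropy, logb, log_inv]
  ring

theorem exists_radius_binEnt_lt {p ρ : ℝ} (hp2 : p < 1 / 2) (hρC : ρ < 1 - binEnt p) :
    ∃ r, p < r ∧ r ≤ 1 / 2 ∧ binEnt r < 1 - ρ := by
  have hcont : Continuous binEnt := by
    simp_rw [funext binEnt_eq_binEntropy_div]
    exact binEntropy_continuous.div_const _
  obtain ⟨r, ⟨hpr, hr⟩, hrρ⟩ := ((show ∀ᶠ x in 𝓝[>] p, x ∈ Set.Ioo p (1 / 2) from
    Ioo_mem_nhdsGT hp2).and (nhdsWithin_le_nhds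
    ((hcont.tendsto p).eventually_lt_const (by linarith : binEnt p < 1 - ρ)))).exists
  exact ⟨r, hpr, hr.le, hrρ⟩

/-- Twice the target size: expurgation may discard half of the codebook. -/
noncomputable def codeSize (ρ : ℝ) (n : ℕ) : ℕ :=
  2 * ⌈(2 : ℝ) ^ (ρ * n)⌉₊

theorem two_mul_two_rpow_le_codeSize (ρ : ℝ) (n : ℕ) : 2 * (2 : ℝ) ^ (ρ * n) ≤ codeSize ρ n := by
  rw [codeSize, Nat.cast_mul, Nat.cast_two]
  gcongr
  exact Nat.le_ceil _

theorem codeSize_pos (ρ : ℝ) (n : ℕ) : 0 < codeSize ρ n := by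
  exact_mod_cast (mul_pos two_pos (rpow_pos_of_pos two_pos _)).trans_le
    (two_mul_two_rpow_le_codeSize ρ n)

theorem codeSize_le {ρ : ℝ} (hρ : 0 ≤ ρ) (n : ℕ) : (codeSize ρ n : ℝ) ≤ 4 * 2 ^ (ρ * n) := by
  have hx : (2 : ℝ)⁻¹ ≤ 2 ^ (ρ * n) :=
    le_trans (by norm_num) (one_le_rpow one_le_two (by positivity))
  rw [codeSize, Nat.cast_mul, Nat.cast_two]
  linarith [Nat.ceil_le_two_mul hx]

theorem tendsto_randomCodingBound_bscWeight {p r ρ : ℝ} (hp : 0 < p) (hp1 : p ≤ 1) (hpr : p < r)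
    (hr : r ≤ 1 / 2) (hρ : 0 ≤ ρ) (hrρ : binEnt r < 1 - ρ) :
    Tendsto (fun n : ℕ => randomCodingBound (Fin n) (ZMod 2) (bscWeight n p) (codeSize ρ n)
      (r * n)) atTop (𝓝 0) := by
  set a : ℝ := 2 ^ (ρ + binEnt r - 1)
  have ha : a < 1 := rpow_lt_one_of_one_lt_of_neg one_lt_two (by linarith)
  have hpow (n : ℕ) : (2 : ℝ) ^ (ρ * n) * 2 ^ (binEnt r * n) / 2 ^ n = a ^ n := by
    rw [← rpow_natCast a, ← rpow_mul zero_le_two, ← rpow_natCast 2 n, ← rpow_add two_pos,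
      ← rpow_sub two_pos]
    ring_nf
  have hbound (n : ℕ) : randomCodingBound (Fin n) (ZMod 2) (bscWeight n p) (codeSize ρ n) (r * n)
      ≤ hammingTail (bscWeight n p) (r * n) + 4 * a ^ n := by
    simp only [randomCodingBound, Fintype.card_fun, ZMod.card, Fintype.card_fin, Nat.cast_pow,
      Nat.cast_ofNat]
    gcongr
    calc ((codeSize ρ n : ℝ) - 1) * hammingBallCard (Fin n) (ZMod 2) (r * n) / 2 ^ n
        ≤ 4 * 2 ^ (ρ * n) * 2 ^ (binEnt r * n) / 2 ^ n := by
          gcongr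
          · linarith [codeSize_le hρ n]
          · exact hammingBallCard_le (hp.trans hpr) hr n
      _ = 4 * a ^ n := by rw [← hpow]; ring
  have hlim : Tendsto (fun n : ℕ => hammingTail (bscWeight n p) (r * n) + 4 * a ^ n) atTop
      (𝓝 0) := by
    simpa using (tendsto_hammingTail_bscWeight hp hp1 hpr).add
      ((tendsto_pow_atTop_nhds_zero_of_lt_one (by positivity) ha).const_mul 4)
  exact squeeze_zero (fun n => randomCodingBound_nonneg (bscWeight_nonneg hp.le hp1)
    (codeSize_pos ρ n) _) hbound hlim

/-- Shannon's noisy channel coding theorem for the binary symmetric channel with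
crossover probability `0 < p < 1/2`: for every `δ > 0` and every positive rate
`ρ < C = 1 - h₂(p)`, for all sufficiently large `n` there are a code
`C_n ⊆ (Fin n → ZMod 2)` of size at least `2^(ρ n)` and a decoder `D` with values in
`C_n` whose average probability of correct decoding exceeds `1 - δ`. -/
theorem stmt_6 (p : ℝ) (hp : 0 < p) (hp2 : p < 1/2)
    (δ : ℝ) (hδ : 0 < δ) (ρ : ℝ) (hρ : 0 < ρ) (hρC : ρ < 1 - binEnt p) :
    ∃ N : ℕ, ∀ n ≥ N,
      ∃ (Cn : Finset (Fin n → ZMod 2)) (D : (Fin n → ZMod 2) → (Fin n → ZMod 2)),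
        (∀ v, D v ∈ Cn) ∧
        (2 : ℝ) ^ (ρ * n) ≤ Cn.card ∧
        (1 / (Cn.card : ℝ)) *
            ∑ u ∈ Cn, ∑ e : Fin n → ZMod 2,
              p ^ hammingNorm e * (1 - p) ^ (n - hammingNorm e) *
                (if D (u + e) = u then 1 else 0)
          > 1 - δ := by
  obtain ⟨r, hpr, hr, hrρ⟩ := exists_radius_binEnt_lt hp2 hρC
  have hp1 : p ≤ 1 := by linarith
  obtain ⟨N, hN⟩ := eventually_atTop.1 ((tendsto_randomCodingBound_bscWeight hp hp1 hpr hr hρ.le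
    hrρ).eventually (gt_mem_nhds (lt_min (half_pos hδ) one_half_pos)))
  refine ⟨N, fun n hn => ?_⟩
  obtain ⟨C, hMC, hdec⟩ := exists_code_ballDecoder_of_lt (bscWeight_nonneg hp.le hp1)
    (sum_bscWeight n p) (codeSize_pos ρ n) (hN n hn)
  have hC : (2 : ℝ) ^ (ρ * n) ≤ #C := by linarith [two_mul_two_rpow_le_codeSize ρ n]
  have hCpos : (0 : ℝ) < #C := (rpow_pos_of_pos two_pos _).trans_le hC
  obtain ⟨w₀, hw₀⟩ : C.Nonempty := card_pos.1 (by exact_mod_cast hCpos)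
  refine ⟨C, ballDecoder C (r * n) w₀, ballDecoder_mem hw₀ _, hC, ?_⟩
  rw [gt_iff_lt, one_div, inv_mul_eq_div, lt_div_iff₀ hCpos]
  exact hdec w₀
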